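/- For n ≥ m-1, the Ehrhart polynomials of the partial permutohedra satisfy the recurrence ehr_{P(m,n)}(t) = (mt+nt-t+1)·ehr_{P(m-1,n)}(t) - (m-1)(nt+t/2+3/2)·t·ehr_{P(m-2,n)}(t) + (m-1)(m-2)·t^2·ehr_{P(m-3,n)}(t)/2, valid whenever all four polytopes involved satisfy the condition n ≥ (number of coordinates) - 1, where the Ehrhart polynomials are given by ehr_{P(k,n)}(t) = k! t^k [z^k] sqrt(1-z) e^{(n+1/2+1/t)z - z^2/(4t)}. -/

import Mathlib

/-- Composition `f(g)` of formal power series (`g` with zero constant term). -/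
noncomputable def psComp (f g : PowerSeries ℚ) : PowerSeries ℚ :=
  PowerSeries.mk fun k => ∑ i ∈ Finset.range (k + 1),
    PowerSeries.coeff (R := ℚ) i f * PowerSeries.coeff (R := ℚ) k (g ^ i)

/-- The expression `E_k(t) = k! t^k [z^k] √(1-z) e^{(n+1/2+1/t)z - z²/(4t)}`, which for
`n ≥ k-1` is the Ehrhart polynomial of `P(k,n)` evaluated at `t`; here `S` is the power
series `√(1-z)` and the exponential denotes composition of `e^z` with
`(n+1/2+1/t)z - z²/(4t)`. -/
noncomputable def ehrExpr (S : PowerSeries ℚ) (n : ℕ) (t : ℚ) (k : ℕ) : ℚ :=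
  k.factorial * t ^ k *
    PowerSeries.coeff (R := ℚ) k (S * psComp (PowerSeries.exp ℚ)
      (PowerSeries.C (R := ℚ) ((n : ℚ) + 1/2 + 1/t) * PowerSeries.X -
        PowerSeries.C (R := ℚ) (1 / (4 * t)) * PowerSeries.X ^ 2))

/-!
The generating function `F = √(1-z) · exp(a z - b z²)` satisfies the first-order linear ODE
`2 (1 - z) F' = (2 (1 - z)(a - 2 b z) - 1) F`: differentiating `S² = 1 - z` gives `2 S S' = -1`,
and the chain rule gives `(exp g)' = g' exp g`. Comparing coefficients of `z^(k+2)` yields a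
three-term recurrence for the coefficients `F_k`, and substituting `a = n + 1/2 + 1/t`,
`b = 1/(4t)` and `E_k = k! t^k F_k` turns it into the stated recurrence.
-/

open PowerSeries

theorem coeff_pow_eq_zero_of_lt {R : Type*} [CommRing R] {g : R⟦X⟧} (hg : constantCoeff g = 0)
    {k i : ℕ} (h : k < i) : coeff k (g ^ i) = 0 :=
  X_pow_dvd_iff.mp (pow_dvd_pow_of_dvd (X_dvd_iff.mpr hg) i) k h

theorem psComp_eq_subst (f : ℚ⟦X⟧) {g : ℚ⟦X⟧} (hg : constantCoeff g = 0) :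
    psComp f g = f.subst g := by
  ext k
  rw [coeff_subst' (HasSubst.of_constantCoeff_zero' hg),
    finsum_eq_sum_of_support_subset (s := Finset.range (k + 1))]
  · simp [psComp, smul_eq_mul]
  · intro d hd
    rw [Function.mem_support] at hd
    rw [Finset.coe_range, Set.mem_Iio]
    by_contra hk
    exact hd (by rw [coeff_pow_eq_zero_of_lt hg (by omega), smul_zero])

theorem derivative_exp_subst {A : Type*} [CommRing A] [Algebra ℚ A] {g : A⟦X⟧}
    (hg : HasSubst g) : d⁄dX A ((exp A).subst g) = (exp A).subst g * d⁄dX A g := by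
  rw [derivative_subst hg, derivative_exp]

section

variable {R : Type*} [CommRing R]

theorem two_mul_one_sub_X_mul_derivative_mul {S E g : R⟦X⟧} (hS : S ^ 2 = 1 - X)
    (hE : d⁄dX R E = E * d⁄dX R g) :
    2 * (1 - X) * d⁄dX R (S * E) = (2 * (1 - X) * d⁄dX R g - 1) * (S * E) := by
  have hSS : 2 * S * d⁄dX R S = -1 := by
    have h := congrArg (d⁄dX R) hS
    simp only [Derivation.leibniz_pow, Derivation.map_sub, derivative_X,
      Derivation.map_one_eq_zero, Nat.add_one_sub_one, pow_one, smul_eq_mul, nsmul_eq_mul,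
      Nat.cast_ofNat, zero_sub] at h
    linear_combination h
  rw [Derivation.leibniz, smul_eq_mul, smul_eq_mul, hE]
  linear_combination (-2 * E * d⁄dX R S) * hS + S * E * hSS

theorem coeff_recurrence_of_derivative {F : R⟦X⟧} {c₀ c₁ c₂ : R}
    (h : 2 * (1 - X) * d⁄dX R F = (C c₀ + C c₁ * X + C c₂ * X ^ 2) * F) (k : ℕ) :
    2 * (k + 3) * coeff (k + 3) F
      = (2 * (k + 2) + c₀) * coeff (k + 2) F + c₁ * coeff (k + 1) F + c₂ * coeff k F := by
  have hk := congrArg (coeff (k + 2)) h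
  rw [← map_ofNat C 2] at hk
  simp only [mul_sub, sub_mul, add_mul, mul_one, mul_assoc, map_sub, map_add, coeff_C_mul,
    coeff_succ_X_mul, coeff_X_pow_mul', coeff_derivative, le_add_iff_nonneg_left, zero_le,
    if_true, Nat.add_sub_cancel] at hk
  push_cast at hk
  linear_combination hk

end

theorem coeff_recurrence_sqrt_mul_exp {A : Type*} [CommRing A] [Algebra ℚ A] {S : A⟦X⟧}
    (hS : S ^ 2 = 1 - X) (a b : A) (k : ℕ) :
    let F := S * (exp A).subst (C a * X - C b * X ^ 2)
    2 * (k + 3) * coeff (k + 3) F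
      = (2 * (k + 2) + (2 * a - 1)) * coeff (k + 2) F - (2 * a + 4 * b) * coeff (k + 1) F
        + 4 * b * coeff k F := by
  intro F
  have hg : HasSubst (C a * X - C b * X ^ 2) := HasSubst.of_constantCoeff_zero' (by simp)
  have hODE := two_mul_one_sub_X_mul_derivative_mul hS (derivative_exp_subst hg)
  have hdg : 2 * (1 - X) * d⁄dX A (C a * X - C b * X ^ 2) - 1
      = C (2 * a - 1) + C (-(2 * a + 4 * b)) * X + C (4 * b) * X ^ 2 := by
    simp only [Derivation.leibniz, Derivation.leibniz_pow, derivative_C, derivative_X,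
      smul_eq_mul, nsmul_eq_mul, map_add, map_sub, map_mul, map_neg, map_one, map_ofNat]
    ring
  rw [hdg] at hODE
  linear_combination coeff_recurrence_of_derivative hODE k

theorem ehrExpr_eq (S : ℚ⟦X⟧) (n : ℕ) (t : ℚ) (k : ℕ) :
    ehrExpr S n t k = k.factorial * t ^ k *
      coeff k (S * (exp ℚ).subst (C ((n : ℚ) + 1/2 + 1/t) * X - C (1 / (4 * t)) * X ^ 2)) := by
  rw [ehrExpr, psComp_eq_subst _ (by simp)]

theorem ehrhart_partialPermutohedron_recurrence_general (m n : ℕ) (hm : 3 ≤ m)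
    (t : ℚ) (ht : t ≠ 0)
    (S : PowerSeries ℚ) (hS : S ^ 2 = 1 - PowerSeries.X) :
    ehrExpr S n t m =
      ((m : ℚ) * t + n * t - t + 1) * ehrExpr S n t (m - 1)
        - ((m : ℚ) - 1) * ((n : ℚ) * t + t / 2 + 3 / 2) * t * ehrExpr S n t (m - 2)
        + ((m : ℚ) - 1) * ((m : ℚ) - 2) * t ^ 2 * ehrExpr S n t (m - 3) / 2 := by
  obtain ⟨k, rfl⟩ : ∃ k, m = k + 3 := ⟨m - 3, by omega⟩
  have hrec := coeff_recurrence_sqrt_mul_exp hS ((n : ℚ) + 1/2 + 1/t) (1 / (4 * t)) k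
  simp only [show k + 3 - 1 = k + 2 from rfl, show k + 3 - 2 = k + 1 from rfl,
    show k + 3 - 3 = k from rfl, ehrExpr_eq, Nat.factorial_succ] at hrec ⊢
  push_cast
  field_simp
  field_simp at hrec
  linear_combination ((k : ℚ) + 1) * (k + 2) * t ^ (k + 2) * hrec

/-- the Ehrhart polynomials of the partial permutohedra satisfy the
three-term recurrence
`E_m = (mt+nt-t+1)E_{m-1} - (m-1)(nt+t/2+3/2)t·E_{m-2} + (m-1)(m-2)t²E_{m-3}/2`,
valid whenever `n ≥ m-1` (so that all four polytopes involved satisfy the condition). -/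
theorem ehrhart_partialPermutohedron_recurrence (m n : ℕ) (hm : 3 ≤ m) (hn : m ≤ n + 1)
    (t : ℚ) (ht : t ≠ 0)
    (S : PowerSeries ℚ) (hS : S ^ 2 = 1 - PowerSeries.X)
    (hS0 : PowerSeries.constantCoeff (R := ℚ) S = 1) :
    ehrExpr S n t m =
      ((m : ℚ) * t + n * t - t + 1) * ehrExpr S n t (m - 1)
        - ((m : ℚ) - 1) * ((n : ℚ) * t + t / 2 + 3 / 2) * t * ehrExpr S n t (m - 2)
        + ((m : ℚ) - 1) * ((m : ℚ) - 2) * t ^ 2 * ehrExpr S n t (m - 3) / 2 :=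
  ehrhart_partialPermutohedron_recurrence_general m n hm t ht S hS
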